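/- arXiv:2011.13124 — 2 statements merged into one kernel-verified Lean document; each statement's English description precedes it below -/
import Mathlib

section
/- A point x of the Cantor space {0,1}^ℕ is eventually periodic (i.e., there exist a finite word y and a nonempty finite word c with x = y·c·c·c·…) if and only if there exists an element v of Thompson's group V such that v(x) = x and the slope of v at x is not equal to 1. -/
/-! Basic setup: the Cantor space, prefix replacement, Thompson's group `V`,
slopes, dyadic rationals, standard dyadic partitions, locally constant maps,
and the permutation model of the twisted fraction groups `LΓ ⋊ V`. -/

abbrev Cantor : Type := ℕ → Bool

/-- Concatenation of a finite word with an infinite sequence. -/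
def cat (w : List Bool) (x : Cantor) : Cantor :=
  fun n => if n < w.length then w.getD n false else x (n - w.length)

/-- The standard dyadic interval (cylinder) associated to a finite word. -/
def cyl (w : List Bool) : Set Cantor := {x | ∃ y : Cantor, x = cat w y}

/-- Membership in Thompson's group `V`: a homeomorphism of the Cantor space which is
everywhere locally given by prefix replacement. -/
def memV (v : Cantor ≃ₜ Cantor) : Prop :=
  ∀ x : Cantor, ∃ (m w : List Bool) (y : Cantor),
    x = cat m y ∧ ∀ z : Cantor, v (cat m z) = cat w z

/-- `HasLogSlope v x k` : `k = log₂ v'(x)`, base-2 logarithm of the slope of `v` at `x`. -/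
def HasLogSlope (v : Cantor ≃ₜ Cantor) (x : Cantor) (k : ℤ) : Prop :=
  ∃ (m w : List Bool) (y : Cantor),
    x = cat m y ∧ (∀ z : Cantor, v (cat m z) = cat w z) ∧
      k = (m.length : ℤ) - (w.length : ℤ)

open Classical in
noncomputable def logSlope (v : Cantor ≃ₜ Cantor) (x : Cantor) : ℤ :=
  if h : ∃ k : ℤ, HasLogSlope v x k then h.choose else 0

/-- The eventually periodic sequence `c∞ = c·c·c⋯`. -/
def tailSeq (c : List Bool) : Cantor := fun n => c.getD (n % c.length) false

/-- `x` lies in the tail equivalence class of the word `c`, i.e. `x = y·c∞`. -/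
def InTailClass (x : Cantor) (c : List Bool) : Prop :=
  ∃ y : List Bool, x = cat y (tailSeq c)

/-- `x` is eventually periodic (a rational point of the Cantor space). -/
def EvPeriodic (x : Cantor) : Prop :=
  ∃ (y c : List Bool), c ≠ [] ∧ x = cat y (tailSeq c)

/-- A prime word: a nonempty word which is not a proper power of a word. -/
def PrimeWord (c : List Bool) : Prop :=
  c ≠ [] ∧ ∀ (d : List Bool) (k : ℕ), 2 ≤ k → c ≠ (List.replicate k d).flatten

/-- `conjH φ v = φ ∘ v ∘ φ⁻¹`. -/
def conjH (φ v : Cantor ≃ₜ Cantor) : Cantor ≃ₜ Cantor := φ.symm.trans (v.trans φ)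

/-- `φ` normalizes Thompson's group `V` inside `Homeo(𝔠)` : `φ V φ⁻¹ = V`. -/
def NormalizesV (φ : Cantor ≃ₜ Cantor) : Prop :=
  (conjH φ) '' {v | memV v} = {v | memV v}

/-- The copy of the dyadic rationals `Q₂ ⊂ 𝔠` : finitely supported sequences. -/
def InQ2 (x : Cantor) : Prop := ∃ n : ℕ, ∀ m, n ≤ m → x m = false

def zeroSeq : Cantor := fun _ => false

/-- A standard dyadic partition of the Cantor space. -/
def IsSDP (P : Finset (List Bool)) : Prop :=
  ∀ x : Cantor, ∃! w : List Bool, w ∈ P ∧ x ∈ cyl w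

/-- Locally constant map: constant on each piece of some standard dyadic partition. -/
def IsLC {Γ : Type*} (f : Cantor → Γ) : Prop :=
  ∃ P : Finset (List Bool), IsSDP P ∧ ∀ w ∈ P, ∀ y z : Cantor, f (cat w y) = f (cat w z)

/-- `h` agrees on `Q₂` with (the restriction of) a locally constant map. -/
def AgreesOnQ2WithLC {Γ : Type*} (h : Cantor → Γ) : Prop :=
  ∃ b : Cantor → Γ, IsLC b ∧ ∀ x, InQ2 x → h x = b x

section GroupPart
variable {Γ : Type*} [Group Γ]

/-- `alphaWord α₀ α₁ (m₁⋯m_k) = α_{m_k} ∘ ⋯ ∘ α_{m₁}`. -/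
def alphaWord (α₀ α₁ : Γ ≃* Γ) (m : List Bool) : Γ ≃* Γ :=
  m.foldl (fun acc b => acc.trans (if b then α₁ else α₀)) (MulEquiv.refl Γ)

open Classical in
/-- The twisting automorphism `τ_{v,x} = α_{v(I)}⁻¹ ∘ α_I` for a standard dyadic
interval `I` containing `x` and adapted to `v`. -/
noncomputable def tauEquiv (α₀ α₁ : Γ ≃* Γ) (v : Cantor ≃ₜ Cantor) (x : Cantor) : Γ ≃* Γ :=
  if h : ∃ p : List Bool × List Bool, x ∈ cyl p.1 ∧ ∀ z : Cantor, v (cat p.1 z) = cat p.2 z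
  then (alphaWord α₀ α₁ h.choose.1).trans (alphaWord α₀ α₁ h.choose.2).symm
  else MulEquiv.refl Γ

/-- The element `a·v` of the twisted `LΓ ⋊ V`, realized as the permutation
`(x,g) ↦ (v x, a(v x) · τ_{v,x}(g))` of `𝔠 × Γ`. -/
noncomputable def permOf (α₀ α₁ : Γ ≃* Γ) (a : Cantor → Γ) (v : Cantor ≃ₜ Cantor) :
    Equiv.Perm (Cantor × Γ) where
  toFun p := (v p.1, a (v p.1) * tauEquiv α₀ α₁ v p.1 p.2)
  invFun p := (v.symm p.1, (tauEquiv α₀ α₁ v (v.symm p.1)).symm ((a p.1)⁻¹ * p.2))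
  left_inv := by rintro ⟨x, g⟩; simp
  right_inv := by rintro ⟨x, g⟩; simp

end GroupPart

/-- The twisted fraction group `G = LΓ ⋊ V` of the triple `(Γ, α₀, α₁)`,
as a group of permutations of `𝔠 × Γ`. -/
noncomputable def Gsub (Γ : Type*) [Group Γ] (α₀ α₁ : Γ ≃* Γ) :
    Subgroup (Equiv.Perm (Cantor × Γ)) :=
  Subgroup.closure {p | ∃ a v, IsLC a ∧ memV v ∧ p = permOf α₀ α₁ a v}

/-- The untwisted case `α₀ = α₁ = id`. -/
noncomputable def permOfU {Γ : Type*} [Group Γ] (a : Cantor → Γ) (v : Cantor ≃ₜ Cantor) :=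
  permOf (MulEquiv.refl Γ) (MulEquiv.refl Γ) a v

/-- The untwisted fraction group `G = LΓ ⋊ V`. -/
noncomputable def GsubU (Γ : Type*) [Group Γ] := Gsub Γ (MulEquiv.refl Γ) (MulEquiv.refl Γ)

/-- `f ∈ N_{K̄}(G)` : the element `f` of `K̄ = ∏_{Q₂}Γ` normalizes `G = LΓ ⋊ V`
(untwisted case), i.e. `f·a·(f^v)⁻¹` and `f⁻¹·a·f^v` are locally constant on `Q₂`. -/
def InNormKbar {Γ : Type*} [Group Γ] (f : Cantor → Γ) : Prop :=
  ∀ (a : Cantor → Γ) (v : Cantor ≃ₜ Cantor), IsLC a → memV v →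
    AgreesOnQ2WithLC (fun x => f x * a x * (f (v.symm x))⁻¹) ∧
    AgreesOnQ2WithLC (fun x => (f x)⁻¹ * a x * f (v.symm x))

def shiftk (k : ℕ) (x : Cantor) : Cantor := fun n => x (n + k)

lemma shiftk_cat (w : List Bool) (x : Cantor) : shiftk w.length (cat w x) = x := by
  funext n
  simp [shiftk, cat]

lemma cat_append (u v : List Bool) (x : Cantor) : cat (u ++ v) x = cat u (cat v x) := by
  funext n
  simp only [cat, List.length_append]
  rcases lt_or_ge n u.length with h | h
  · rw [if_pos (show n < u.length + v.length by omega), if_pos h,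
      List.getD_append _ _ _ _ h]
  · rcases lt_or_ge n (u.length + v.length) with h2 | h2
    · rw [if_pos h2, if_neg (show ¬ n < u.length by omega),
        if_pos (show n - u.length < v.length by omega), List.getD_append_right _ _ _ _ h]
    · rw [if_neg (show ¬ n < u.length + v.length by omega),
        if_neg (show ¬ n < u.length by omega),
        if_neg (show ¬ n - u.length < v.length by omega)]
      congr 1; omega

lemma cat_mem_cyl (w : List Bool) (x : Cantor) : cat w x ∈ cyl w := ⟨x, rfl⟩

lemma eq_cat_of_mem {x : Cantor} {w : List Bool} (h : x ∈ cyl w) :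
    x = cat w (shiftk w.length x) := by
  obtain ⟨y, rfl⟩ := h
  rw [shiftk_cat]

lemma cat_inj {w : List Bool} {y z : Cantor} (h : cat w y = cat w z) : y = z := by
  have := congrArg (shiftk w.length) h
  simpa [shiftk_cat] using this

lemma mem_cyl_iff {x : Cantor} {w : List Bool} :
    x ∈ cyl w ↔ ∀ i < w.length, x i = w.getD i false := by
  constructor
  · rintro ⟨y, rfl⟩ i hi
    simp [cat, hi]
  · intro h
    refine ⟨shiftk w.length x, ?_⟩
    funext n
    simp only [cat, shiftk]
    rcases lt_or_ge n w.length with h2 | h2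
    · rw [if_pos h2]; exact h n h2
    · rw [if_neg (by omega)]; congr 1; omega

lemma cyl_append_subset (u v : List Bool) : cyl (u ++ v) ⊆ cyl u := by
  rintro x ⟨y, rfl⟩
  rw [cat_append]; exact cat_mem_cyl _ _

lemma mem_cat_cyl_append {u v : List Bool} {z : Cantor} :
    cat u z ∈ cyl (u ++ v) ↔ z ∈ cyl v := by
  constructor
  · rintro ⟨y, h⟩
    rw [cat_append] at h
    exact (cat_inj h) ▸ cat_mem_cyl _ _
  · rintro ⟨y, rfl⟩
    rw [← cat_append]; exact cat_mem_cyl _ _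

lemma mem_cyl_congr {x x' : Cantor} {w : List Bool} (h : ∀ i < w.length, x i = x' i) :
    x ∈ cyl w ↔ x' ∈ cyl w := by
  rw [mem_cyl_iff, mem_cyl_iff]
  exact ⟨fun H i hi => (h i hi).symm.trans (H i hi), fun H i hi => (h i hi).trans (H i hi)⟩

lemma cyl_disj {a r : List Bool} (hlen : r.length = a.length) {i : ℕ} (hi : i < a.length)
    (hne : a.getD i false ≠ r.getD i false) {x : Cantor} (ha : x ∈ cyl a) : x ∉ cyl r := by
  intro hr
  rw [mem_cyl_iff] at ha hr
  exact hne ((ha i hi).symm.trans (hr i (by omega)))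

lemma isOpen_cyl (w : List Bool) : IsOpen (cyl w) := by
  have : cyl w = ⋂ i ∈ Finset.range w.length, {x : Cantor | x i = w.getD i false} := by
    ext x
    simp only [Set.mem_iInter, Finset.mem_range, Set.mem_setOf_eq, mem_cyl_iff]
  rw [this]
  refine isOpen_biInter_finset fun i _ => ?_
  have h2 : {x : Cantor | x i = w.getD i false} =
      (fun x : Cantor => x i) ⁻¹' {w.getD i false} := rfl
  rw [h2]
  exact (continuous_apply i).isOpen_preimage _ (isOpen_discrete _)

lemma continuous_of_locPref {f : Cantor → Cantor}
    (h : ∀ x, ∃ m w, x ∈ cyl m ∧ ∀ z, f (cat m z) = cat w z) : Continuous f := by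
  rw [continuous_iff_continuousAt]
  intro x
  obtain ⟨m, w, hx, hf⟩ := h x
  have hg : Continuous fun u : Cantor => cat w (shiftk m.length u) := by
    refine continuous_pi fun n => ?_
    simp only [cat, shiftk]
    rcases lt_or_ge n w.length with h2 | h2
    · simpa [h2] using continuous_const
    · simpa [show ¬ n < w.length by omega] using continuous_apply (n - w.length + m.length)
  refine ContinuousAt.congr hg.continuousAt ?_
  refine Filter.eventuallyEq_of_mem ((isOpen_cyl m).mem_nhds hx) fun u hu => ?_
  have := hf (shiftk m.length u)
  rw [← eq_cat_of_mem hu] at this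
  exact this.symm

open Classical in
noncomputable def fwd (a t r : List Bool) (x : Cantor) : Cantor :=
  if x ∈ cyl (a ++ t) then cat a (shiftk (a ++ t).length x)
  else if x ∈ cyl a then cat r (shiftk a.length x)
  else if x ∈ cyl r then cat (r ++ t) (shiftk r.length x)
  else x

lemma fwd_cat_at (a t r : List Bool) (z : Cantor) :
    fwd a t r (cat (a ++ t) z) = cat a z := by
  rw [fwd, if_pos (cat_mem_cyl _ _), shiftk_cat]

lemma fwd_eval2 {a t : List Bool} (r : List Bool) {z : Cantor} (h : cat a z ∉ cyl (a ++ t)) :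
    fwd a t r (cat a z) = cat r z := by
  rw [fwd, if_neg h, if_pos (cat_mem_cyl a z), shiftk_cat]

lemma fwd_eval3 {a t r : List Bool} {z : Cantor} (h1 : cat r z ∉ cyl (a ++ t))
    (h2 : cat r z ∉ cyl a) : fwd a t r (cat r z) = cat (r ++ t) z := by
  rw [fwd, if_neg h1, if_neg h2, if_pos (cat_mem_cyl r z), shiftk_cat]

lemma fwd_eval4 {a t r : List Bool} {x : Cantor} (h1 : x ∉ cyl (a ++ t)) (h2 : x ∉ cyl a)
    (h3 : x ∉ cyl r) : fwd a t r x = x := by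
  rw [fwd, if_neg h1, if_neg h2, if_neg h3]

section Inv
variable {a t r : List Bool} {i : ℕ} (hlen : r.length = a.length) (hi : i < a.length)
  (hne : a.getD i false ≠ r.getD i false)

include hlen hi hne

lemma fwd_inv (x : Cantor) : fwd r t a (fwd a t r x) = x := by
  have disjar : ∀ {u : Cantor}, u ∈ cyl a → u ∉ cyl r := fun hu => cyl_disj hlen hi hne hu
  by_cases h1 : x ∈ cyl (a ++ t)
  · obtain ⟨z, rfl⟩ := h1
    rw [fwd_cat_at,
      fwd_eval3 (fun hh => disjar (cat_mem_cyl a z) (cyl_append_subset r t hh))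
        (disjar (cat_mem_cyl a z)), cat_append]
  by_cases h2 : x ∈ cyl a
  · obtain ⟨z, rfl⟩ := h2
    have hz : z ∉ cyl t := fun ht => h1 (mem_cat_cyl_append.mpr ht)
    rw [fwd_eval2 r h1, fwd_eval2 a (fun hh => hz (mem_cat_cyl_append.mp hh))]
  by_cases h3 : x ∈ cyl r
  · obtain ⟨z, rfl⟩ := h3
    rw [fwd_eval3 (fun hh => h2 (cyl_append_subset a t hh)) h2, fwd_cat_at]
  · rw [fwd_eval4 h1 h2 h3,
      fwd_eval4 (fun hh => h3 (cyl_append_subset r t hh)) h3 h2]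

lemma locPref_fwd (x : Cantor) :
    ∃ m w : List Bool, x ∈ cyl m ∧ ∀ z, fwd a t r (cat m z) = cat w z := by
  have disjar : ∀ {u : Cantor}, u ∈ cyl a → u ∉ cyl r := fun hu => cyl_disj hlen hi hne hu
  by_cases h1 : x ∈ cyl (a ++ t)
  · exact ⟨a ++ t, a, h1, fun z => fwd_cat_at a t r z⟩
  by_cases h2 : x ∈ cyl a
  · refine ⟨a ++ List.ofFn (fun j : Fin t.length => x (j + a.length)),
      r ++ List.ofFn (fun j : Fin t.length => x (j + a.length)), ?_, ?_⟩
    · rw [mem_cyl_iff]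
      intro n hn
      rw [List.length_append, List.length_ofFn] at hn
      rcases lt_or_ge n a.length with h | h
      · rw [List.getD_append _ _ _ _ h]
        exact (mem_cyl_iff.mp h2) n h
      · rw [List.getD_append_right _ _ _ _ h,
          List.getD_eq_getElem _ _ (by simp; omega), List.getElem_ofFn]
        show x n = x (n - a.length + a.length)
        congr 1; omega
    · intro z
      set p := List.ofFn (fun j : Fin t.length => x (j + a.length)) with hp
      have hpl : p.length = t.length := by rw [hp, List.length_ofFn]
      have hagree : ∀ n < (a ++ t).length, cat (a ++ p) z n = x n := by
        intro n hn
        rw [List.length_append] at hn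
        have hn' : n < (a ++ p).length := by rw [List.length_append, hpl]; omega
        rw [(mem_cyl_iff.mp (cat_mem_cyl (a ++ p) z)) n hn']
        rcases lt_or_ge n a.length with h | h
        · rw [List.getD_append _ _ _ _ h]
          exact ((mem_cyl_iff.mp h2) n h).symm
        · rw [List.getD_append_right _ _ _ _ h, hp,
            List.getD_eq_getElem _ _ (by simp; omega), List.getElem_ofFn]
          show x (n - a.length + a.length) = x n
          congr 1; omega
      have hnot1 : cat (a ++ p) z ∉ cyl (a ++ t) := by
        rw [mem_cyl_congr hagree]; exact h1
      rw [fwd, if_neg hnot1, cat_append,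
        if_pos (cat_mem_cyl a _), shiftk_cat, ← cat_append]
  by_cases h3 : x ∈ cyl r
  · refine ⟨r, r ++ t, h3, fun z => ?_⟩
    rw [fwd, if_neg (fun hh => disjar (cyl_append_subset a t hh) (cat_mem_cyl r z)),
      if_neg (fun hh => disjar hh (cat_mem_cyl r z)), if_pos (cat_mem_cyl r z), shiftk_cat]
  · refine ⟨List.ofFn (fun j : Fin a.length => x j), List.ofFn (fun j : Fin a.length => x j),
      ?_, fun z => ?_⟩
    · rw [mem_cyl_iff]
      intro n hn
      rw [List.length_ofFn] at hn
      rw [List.getD_eq_getElem _ _ (by simpa), List.getElem_ofFn]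
    · set p := List.ofFn (fun j : Fin a.length => x j) with hp
      have hpl : p.length = a.length := by rw [hp, List.length_ofFn]
      have hagree : ∀ n < a.length, cat p z n = x n := by
        intro n hn
        have hn' : n < p.length := by omega
        rw [(mem_cyl_iff.mp (cat_mem_cyl p z)) n hn', hp,
          List.getD_eq_getElem _ _ (by simpa), List.getElem_ofFn]
      have n1 : cat p z ∉ cyl a := fun hh => h2 ((mem_cyl_congr hagree).mp hh)
      have n3 : cat p z ∉ cyl r := fun hh =>
        h3 ((mem_cyl_congr (fun n hn => hagree n (by omega))).mp hh)
      rw [fwd, if_neg (fun hh => n1 (cyl_append_subset a t hh)), if_neg n1, if_neg n3]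

end Inv

lemma tailSeq_eq_cat {c : List Bool} (hc : c ≠ []) : tailSeq c = cat c (tailSeq c) := by
  have hl : 0 < c.length := List.length_pos_iff.mpr hc
  funext n
  simp only [cat, tailSeq]
  rcases lt_or_ge n c.length with h | h
  · rw [if_pos h, Nat.mod_eq_of_lt h]
  · rw [if_neg (by omega)]
    congr 1
    rw [Nat.mod_eq_sub_mod h]

lemma periodic_eq_tailSeq {y : Cantor} {p : ℕ} (hp : 0 < p) (h : ∀ n, y (n + p) = y n) :
    y = tailSeq (List.ofFn fun i : Fin p => y i) := by
  have hmod : ∀ n, y n = y (n % p) := by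
    intro n
    induction n using Nat.strong_induction_on with
    | _ n ih =>
      rcases lt_or_ge n p with hn | hn
      · rw [Nat.mod_eq_of_lt hn]
      · rw [Nat.mod_eq_sub_mod hn, ← ih (n - p) (by omega)]
        rw [← h (n - p)]
        congr 1; omega
  funext n
  simp only [tailSeq, List.length_ofFn]
  rw [List.getD_eq_getElem _ _ (by simp [Nat.mod_lt n hp]), List.getElem_ofFn]
  exact hmod n

lemma cat_eq_cat_periodic {m w : List Bool} {y : Cantor} (hne : m.length ≠ w.length)
    (h : cat m y = cat w y) : ∃ p, 0 < p ∧ ∀ n, y (n + p) = y n := by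
  rcases lt_or_gt_of_ne hne with hlt | hlt
  · refine ⟨w.length - m.length, by omega, fun n => ?_⟩
    have := congrFun h (n + w.length)
    simp only [cat] at this
    rw [if_neg (by omega), if_neg (by omega)] at this
    rw [show n + w.length - m.length = n + (w.length - m.length) by omega,
      Nat.add_sub_cancel] at this
    exact this
  · refine ⟨m.length - w.length, by omega, fun n => ?_⟩
    have := congrFun h (n + m.length)
    simp only [cat] at this
    rw [if_neg (by omega), if_neg (by omega)] at this
    rw [Nat.add_sub_cancel,
      show n + m.length - w.length = n + (m.length - w.length) by omega] at this
    exact this.symm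

/-- A point of the Cantor space is eventually periodic iff some element
of Thompson's group `V` fixes it with slope different from `1`. -/

theorem rational_iff_fixed_with_nontrivial_slope (x : Cantor) :
    EvPeriodic x ↔
      ∃ v : Cantor ≃ₜ Cantor, memV v ∧ v x = x ∧ ∃ k : ℤ, k ≠ 0 ∧ HasLogSlope v x k := by
  constructor
  · rintro ⟨y, c, hc, rfl⟩
    obtain ⟨b, l, hb⟩ : ∃ b l, y ++ c = b ++ [l] := by
      rcases List.eq_nil_or_concat (y ++ c) with h | ⟨L, e, h⟩
      · exact absurd (List.append_eq_nil_iff.mp h).2 hc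
      · exact ⟨L, e, by simpa [List.concat_eq_append] using h⟩
    set a := y ++ c with ha
    set r := b ++ [!l] with hr
    have key : ∀ (u : List Bool) (e : Bool), (u ++ [e]).getD u.length false = e := by
      intro u e
      rw [List.getD_append_right _ _ _ _ le_rfl, Nat.sub_self]
      rfl
    have hlen : r.length = a.length := by simp [hr, hb]
    have hi : b.length < a.length := by simp [hb]
    have hne : a.getD b.length false ≠ r.getD b.length false := by
      rw [hb, hr, key, key]
      simp
    have hx : cat y (tailSeq c) = cat (a ++ c) (tailSeq c) := by
      rw [cat_append, ha, cat_append, ← tailSeq_eq_cat hc, ← tailSeq_eq_cat hc]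
    refine ⟨⟨⟨fwd a c r, fwd r c a, fwd_inv hlen hi hne,
        fwd_inv hlen.symm (by omega) (Ne.symm hne)⟩,
        continuous_of_locPref (locPref_fwd hlen hi hne),
        continuous_of_locPref (locPref_fwd hlen.symm (by omega) (Ne.symm hne))⟩,
      ?_, ?_, (c.length : ℤ), ?_, ?_⟩
    · intro x
      obtain ⟨m, w, hxm, hf⟩ := locPref_fwd hlen hi hne x
      obtain ⟨y', hy'⟩ := hxm
      exact ⟨m, w, y', hy', hf⟩
    · show fwd a c r (cat y (tailSeq c)) = cat y (tailSeq c)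
      conv_lhs => rw [hx]
      rw [fwd_cat_at, ha, cat_append, ← tailSeq_eq_cat hc]
    · simpa using hc
    · refine ⟨a ++ c, a, tailSeq c, hx, fun z => fwd_cat_at a c r z, ?_⟩
      rw [List.length_append]
      push_cast
      ring
  · rintro ⟨v, _, hfix, k, hk0, m, w, y, hxm, hvm, hk⟩
    have hxw : cat m y = cat w y := by
      have h1 := hvm y
      rw [← hxm, hfix, hxm] at h1
      exact h1
    have hnel : m.length ≠ w.length := by
      intro h
      rw [h] at hk
      simp at hk
      exact hk0 hk
    obtain ⟨p, hp, hper⟩ := cat_eq_cat_periodic hnel hxw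
    refine ⟨m, List.ofFn fun i : Fin p => y i, ?_, ?_⟩
    · intro h
      have := congrArg List.length h
      simp at this
      omega
    · rw [← periodic_eq_tailSeq hp hper]
      exact hxm
end

section
/- Let Γ be a group with automorphisms α₀, α₁ and let G = LΓ ⋊ V be the associated twisted fraction group. Then the center of G equals D_𝔠(Z(Γ)^α), the subgroup of constant maps from the Cantor space to the set of elements of the center of Γ that are fixed by both α₀ and α₁. -/
/-!
Taking `b = 1`, the point map `v` commutes with all of `V`. For `x ≠ y`, `V` contains the swap
of the two halves of a cylinder around `x` that avoids `y`; it fixes `y` and moves `x`, so `v = 1`.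

With `v = 1`, commuting with constant maps makes `a` central-valued, and commuting with the swap
of disjoint cylinders `u`, `u'` gives `α_{u'}(a(u'·0^∞)) = α_u(a(u·0^∞))`. Beyond the depth `N` at
which `a` is locally constant, comparing `u0` with `u1` and with `u10` shows that `α_u(a(u·0^∞))`
is fixed by `α₀` and `α₁`. Distinct words of length `N` have disjoint cylinders, so this fixed
value `g` is the same for all of them, and `a(u·z) = α_u⁻¹ g = g`.
-/

namespace TwistedFraction

lemma cat_apply_of_lt {u : List Bool} {n : ℕ} (y : Cantor) (h : n < u.length) :
    cat u y n = u.getD n false := if_pos h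

lemma cat_apply_of_le {u : List Bool} {n : ℕ} (y : Cantor) (h : u.length ≤ n) :
    cat u y n = y (n - u.length) := if_neg (Nat.not_lt.mpr h)

lemma cat_append (u s : List Bool) (z : Cantor) : cat u (cat s z) = cat (u ++ s) z := by
  funext n
  by_cases h₁ : n < u.length
  · rw [cat_apply_of_lt _ h₁, cat_apply_of_lt _ (by simp; omega), List.getD_append _ _ _ _ h₁]
  rw [cat_apply_of_le _ (by omega)]
  by_cases h₂ : n - u.length < s.length
  · rw [cat_apply_of_lt _ h₂, cat_apply_of_lt _ (by simp; omega),
      List.getD_append_right _ _ _ _ (by omega)]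
  rw [cat_apply_of_le _ (by omega), cat_apply_of_le _ (by simp; omega)]
  simp only [List.length_append]
  congr 1
  omega

lemma cat_apply_length (u s : List Bool) (b : Bool) (z : Cantor) :
    cat (u ++ b :: s) z u.length = b := by
  rw [cat_apply_of_lt _ (by simp), List.getD_append_right _ _ _ _ le_rfl]
  simp

lemma cat_mem_cyl (u : List Bool) (z : Cantor) : cat u z ∈ cyl u := ⟨z, rfl⟩

def dropSeq (k : ℕ) (x : Cantor) : Cantor := fun n => x (n + k)

lemma dropSeq_cat (u : List Bool) (z : Cantor) : dropSeq u.length (cat u z) = z := by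
  funext n
  simp [dropSeq, cat_apply_of_le]

def prefixWord (n : ℕ) (x : Cantor) : List Bool := (List.range n).map x

@[simp] lemma length_prefixWord (n : ℕ) (x : Cantor) : (prefixWord n x).length = n := by
  simp [prefixWord]

lemma getD_prefixWord {n i : ℕ} (x : Cantor) (h : i < n) : (prefixWord n x).getD i false = x i := by
  simp [prefixWord, h]

lemma prefixWord_succ (n : ℕ) (x : Cantor) : prefixWord (n + 1) x = prefixWord n x ++ [x n] := by
  simp [prefixWord, List.range_succ]

lemma exists_prefixWord_eq_append {k l : ℕ} (x : Cantor) (h : k ≤ l) :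
    ∃ s, prefixWord l x = prefixWord k x ++ s := by
  obtain ⟨j, rfl⟩ := Nat.exists_eq_add_of_le h
  exact ⟨(List.range j).map (x ∘ (k + ·)), by simp [prefixWord, List.range_add]⟩

lemma cat_prefixWord_dropSeq (n : ℕ) (x : Cantor) : cat (prefixWord n x) (dropSeq n x) = x := by
  funext i
  by_cases h : i < n
  · rw [cat_apply_of_lt _ (by simpa), getD_prefixWord x h]
  · rw [cat_apply_of_le _ (by simp; omega), dropSeq, length_prefixWord]
    congr 1
    omega

lemma mem_cyl_prefixWord (n : ℕ) (x : Cantor) : x ∈ cyl (prefixWord n x) :=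
  ⟨dropSeq n x, (cat_prefixWord_dropSeq n x).symm⟩

lemma prefixWord_cat (u : List Bool) (z : Cantor) : prefixWord u.length (cat u z) = u := by
  refine List.ext_getElem (by simp) fun i h _ => ?_
  rw [← List.getD_eq_getElem _ false, ← List.getD_eq_getElem _ false,
    getD_prefixWord _ (by simpa using h), cat_apply_of_lt _ (by simpa using h)]

lemma mem_cyl_iff_prefixWord {u : List Bool} {x : Cantor} :
    x ∈ cyl u ↔ prefixWord u.length x = u := by
  refine ⟨?_, fun h => ?_⟩
  · rintro ⟨y, rfl⟩
    exact prefixWord_cat u y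
  · simpa [h] using mem_cyl_prefixWord u.length x

lemma mem_cyl_iff {u : List Bool} {x : Cantor} :
    x ∈ cyl u ↔ ∀ i < u.length, x i = u.getD i false := by
  rw [mem_cyl_iff_prefixWord]
  refine ⟨fun h i hi => by rw [← h, getD_prefixWord x hi], fun h => ?_⟩
  refine List.ext_getElem (by simp) fun i h₁ h₂ => ?_
  simp only [length_prefixWord] at h₁
  rw [← List.getD_eq_getElem _ false, ← List.getD_eq_getElem _ false, getD_prefixWord x h₁,
    h i h₁]

lemma exists_append_of_mem_cyl {m m' : List Bool} {x : Cantor} (h : x ∈ cyl m)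
    (h' : x ∈ cyl m') (hle : m.length ≤ m'.length) : ∃ s, m' = m ++ s := by
  rw [mem_cyl_iff_prefixWord] at h h'
  obtain ⟨s, hs⟩ := exists_prefixWord_eq_append x hle
  exact ⟨s, by rw [← h', hs, h]⟩

lemma cyl_append_subset (u s : List Bool) : cyl (u ++ s) ⊆ cyl u := by
  rintro _ ⟨y, rfl⟩
  exact ⟨cat s y, (cat_append u s y).symm⟩

lemma cyl_subset_of_cat_mem_cyl {m u : List Bool} {z : Cantor} (h : cat m z ∈ cyl u)
    (hle : u.length ≤ m.length) : cyl m ⊆ cyl u := by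
  obtain ⟨s, rfl⟩ := exists_append_of_mem_cyl h (cat_mem_cyl m z) hle
  exact cyl_append_subset u s

lemma eq_of_forall_cat_eq {m w : List Bool} (h : ∀ z, cat m z = cat w z) : m = w := by
  wlog hle : m.length ≤ w.length generalizing m w
  · exact (this (fun z => (h z).symm) (by omega)).symm
  obtain ⟨s, rfl⟩ := exists_append_of_mem_cyl (cat_mem_cyl m zeroSeq)
    (by rw [h]; exact cat_mem_cyl _ _) hle
  cases s with
  | nil => simp
  | cons b s =>
    have := congrFun (h fun _ => !b) m.length
    rw [cat_apply_length, cat_apply_of_le _ le_rfl] at this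
    simp at this

lemma disjoint_cyl_append_cons (u s t : List Bool) {b c : Bool} (h : b ≠ c) :
    Disjoint (cyl (u ++ b :: s)) (cyl (u ++ c :: t)) := by
  rw [Set.disjoint_left]
  rintro _ ⟨y, rfl⟩ ⟨z, hz⟩
  exact h (by simpa only [cat_apply_length] using congrFun hz u.length)

lemma disjoint_cyl_of_length_eq {u w : List Bool} (hlen : u.length = w.length) (hne : u ≠ w) :
    Disjoint (cyl u) (cyl w) := by
  rw [Set.disjoint_left]
  intro x hu hw
  rw [mem_cyl_iff_prefixWord] at hu hw
  rw [hlen] at hu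
  exact hne (hu.symm.trans hw)

lemma isClopen_cyl (u : List Bool) : IsClopen (cyl u) := by
  have : cyl u =
      (fun x : Cantor => fun i : Fin u.length => x i) ⁻¹' {fun i : Fin _ => u.getD i false} := by
    ext x
    simp +contextual [mem_cyl_iff, funext_iff, Fin.forall_iff]
  rw [this]
  exact (isClopen_discrete _).preimage (by fun_prop)

lemma continuous_cat (u : List Bool) : Continuous (cat u) := by
  refine continuous_pi fun n => ?_
  unfold cat
  split_ifs <;> fun_prop

lemma continuous_dropSeq (k : ℕ) : Continuous (dropSeq k) :=
  continuous_pi fun n => continuous_apply (n + k)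

open Classical in
noncomputable def swapFun (u w : List Bool) : Cantor → Cantor :=
  (cyl u).piecewise (cat w ∘ dropSeq u.length)
    ((cyl w).piecewise (cat u ∘ dropSeq w.length) id)

lemma swapFun_cat_left (u w : List Bool) (z : Cantor) : swapFun u w (cat u z) = cat w z := by
  simp [swapFun, cat_mem_cyl, dropSeq_cat]

lemma swapFun_cat_right {u w : List Bool} (hd : Disjoint (cyl u) (cyl w)) (z : Cantor) :
    swapFun u w (cat w z) = cat u z := by
  simp [swapFun, cat_mem_cyl, dropSeq_cat, Set.disjoint_right.mp hd (cat_mem_cyl w z)]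

lemma swapFun_of_not_mem {u w : List Bool} {x : Cantor} (hu : x ∉ cyl u) (hw : x ∉ cyl w) :
    swapFun u w x = x := by
  simp [swapFun, hu, hw]

lemma swapFun_involutive {u w : List Bool} (hd : Disjoint (cyl u) (cyl w)) :
    Function.Involutive (swapFun u w) := by
  intro x
  by_cases hu : x ∈ cyl u
  · obtain ⟨z, rfl⟩ := hu
    rw [swapFun_cat_left, swapFun_cat_right hd]
  by_cases hw : x ∈ cyl w
  · obtain ⟨z, rfl⟩ := hw
    rw [swapFun_cat_right hd, swapFun_cat_left]
  rw [swapFun_of_not_mem hu hw, swapFun_of_not_mem hu hw]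

open Classical in
lemma continuous_swapFun (u w : List Bool) : Continuous (swapFun u w) := by
  refine Continuous.piecewise (by simp [(isClopen_cyl u).frontier_eq])
    ((continuous_cat w).comp (continuous_dropSeq _)) ?_
  exact Continuous.piecewise (by simp [(isClopen_cyl w).frontier_eq])
    ((continuous_cat u).comp (continuous_dropSeq _)) continuous_id

noncomputable def swapHomeo {u w : List Bool} (hd : Disjoint (cyl u) (cyl w)) :
    Cantor ≃ₜ Cantor where
  toEquiv := (swapFun_involutive hd).toPerm
  continuous_toFun := continuous_swapFun u w
  continuous_invFun := continuous_swapFun u w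

@[simp] lemma swapHomeo_apply {u w : List Bool} (hd : Disjoint (cyl u) (cyl w)) (x : Cantor) :
    swapHomeo hd x = swapFun u w x := rfl

lemma memV_swapHomeo {u w : List Bool} (hd : Disjoint (cyl u) (cyl w)) : memV (swapHomeo hd) := by
  intro x
  by_cases hu : x ∈ cyl u
  · obtain ⟨z, rfl⟩ := hu
    exact ⟨u, w, z, rfl, swapFun_cat_left u w⟩
  by_cases hw : x ∈ cyl w
  · obtain ⟨z, rfl⟩ := hw
    exact ⟨w, u, z, rfl, swapFun_cat_right hd⟩
  set L := max u.length w.length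
  refine ⟨prefixWord L x, prefixWord L x, dropSeq L x, (cat_prefixWord_dropSeq L x).symm,
    fun z => swapFun_of_not_mem ?_ ?_⟩
  · exact fun h => hu (cyl_subset_of_cat_mem_cyl h (by simp [L]) (mem_cyl_prefixWord L x))
  · exact fun h => hw (cyl_subset_of_cat_mem_cyl h (by simp [L]) (mem_cyl_prefixWord L x))

lemma memV_refl : memV (Homeomorph.refl Cantor) :=
  fun x => ⟨[], [], x, rfl, fun _ => rfl⟩

lemma exists_memV_fixing_moving {x y : Cantor} (hxy : x ≠ y) :
    ∃ σ : Cantor ≃ₜ Cantor, memV σ ∧ σ y = y ∧ σ x ≠ x := by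
  obtain ⟨n, hn⟩ := Function.ne_iff.mp hxy
  obtain ⟨b, hb⟩ : ∃ b, x (n + 1) = b := ⟨_, rfl⟩
  have hd : Disjoint (cyl (prefixWord (n + 1) x ++ [b])) (cyl (prefixWord (n + 1) x ++ [!b])) :=
    disjoint_cyl_append_cons _ [] [] (by simp)
  have hy : y ∉ cyl (prefixWord (n + 1) x) := fun h =>
    hn (by rw [mem_cyl_iff.mp h n (by simp), getD_prefixWord x (by omega)])
  refine ⟨swapHomeo hd, memV_swapHomeo hd, ?_, fun h => ?_⟩
  · exact swapFun_of_not_mem (fun h => hy (cyl_append_subset _ _ h))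
      (fun h => hy (cyl_append_subset _ _ h))
  have hx : x = cat (prefixWord (n + 1) x ++ [b]) (dropSeq (n + 2) x) := by
    rw [← hb, ← prefixWord_succ, cat_prefixWord_dropSeq]
  have hswap := swapFun_cat_left (prefixWord (n + 1) x ++ [b]) (prefixWord (n + 1) x ++ [!b])
    (dropSeq (n + 2) x)
  rw [← hx] at hswap
  have hflip := cat_apply_length (prefixWord (n + 1) x) [] (!b) (dropSeq (n + 2) x)
  rw [length_prefixWord] at hflip
  have := congrFun h (n + 1)
  rw [swapHomeo_apply, hswap, hflip, hb] at this
  simp at this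

lemma eq_refl_of_forall_commute {v : Cantor ≃ₜ Cantor}
    (h : ∀ σ : Cantor ≃ₜ Cantor, memV σ → ∀ x, v (σ x) = σ (v x)) :
    v = Homeomorph.refl Cantor := by
  refine Homeomorph.ext fun x => by_contra fun hx => ?_
  obtain ⟨σ, hσ, hfix, hmove⟩ := exists_memV_fixing_moving (Ne.symm hx : x ≠ v x)
  exact hmove (v.injective ((h σ hσ x).trans hfix))

section Twist

variable {Γ : Type*} [Group Γ] (α₀ α₁ : Γ ≃* Γ)

lemma foldl_eq_trans_alphaWord (t : List Bool) (e : Γ ≃* Γ) :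
    t.foldl (fun acc b => acc.trans (if b then α₁ else α₀)) e = e.trans (alphaWord α₀ α₁ t) := by
  induction t generalizing e with
  | nil => rfl
  | cons b t ih =>
    simp only [alphaWord, List.foldl_cons] at ih ⊢
    rw [ih, ih (MulEquiv.refl Γ |>.trans _)]
    rfl

lemma alphaWord_append (m t : List Bool) :
    alphaWord α₀ α₁ (m ++ t) = (alphaWord α₀ α₁ m).trans (alphaWord α₀ α₁ t) := by
  rw [alphaWord, List.foldl_append, foldl_eq_trans_alphaWord]
  rfl

lemma alphaWord_concat_apply (m : List Bool) (b : Bool) (g : Γ) :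
    alphaWord α₀ α₁ (m ++ [b]) g = (if b then α₁ else α₀) (alphaWord α₀ α₁ m g) := by
  rw [alphaWord_append]
  rfl

variable {α₀ α₁}

lemma alphaWord_apply_of_fixed {g : Γ} (h₀ : α₀ g = g) (h₁ : α₁ g = g) (m : List Bool) :
    alphaWord α₀ α₁ m g = g := by
  induction m using List.reverseRecOn with
  | nil => rfl
  | append_singleton m b ih => cases b <;> simp [alphaWord_concat_apply, ih, h₀, h₁]

lemma alphaWord_trans_symm_eq_of_adapted {v : Cantor ≃ₜ Cantor} {x : Cantor}
    {m w m' w' : List Bool} (hm : x ∈ cyl m) (hm' : x ∈ cyl m')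
    (hv : ∀ z, v (cat m z) = cat w z) (hv' : ∀ z, v (cat m' z) = cat w' z)
    (hle : m.length ≤ m'.length) :
    (alphaWord α₀ α₁ m').trans (alphaWord α₀ α₁ w').symm =
      (alphaWord α₀ α₁ m).trans (alphaWord α₀ α₁ w).symm := by
  obtain ⟨s, rfl⟩ := exists_append_of_mem_cyl hm hm' hle
  obtain rfl : w' = w ++ s := eq_of_forall_cat_eq fun z => by
    rw [← hv', ← cat_append, hv, cat_append]
  ext g
  simp [alphaWord_append]

/-- Although `tauEquiv` picks its adapted interval by choice, any adapted interval computes it. -/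
lemma tauEquiv_eq {v : Cantor ≃ₜ Cantor} {x : Cantor} {m w : List Bool} (hx : x ∈ cyl m)
    (hv : ∀ z, v (cat m z) = cat w z) :
    tauEquiv α₀ α₁ v x = (alphaWord α₀ α₁ m).trans (alphaWord α₀ α₁ w).symm := by
  have hex : ∃ p : List Bool × List Bool, x ∈ cyl p.1 ∧ ∀ z, v (cat p.1 z) = cat p.2 z :=
    ⟨(m, w), hx, hv⟩
  obtain ⟨hp, hvp⟩ := hex.choose_spec
  rw [tauEquiv, dif_pos hex]
  rcases le_total m.length hex.choose.1.length with hle | hle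
  · exact alphaWord_trans_symm_eq_of_adapted hx hp hv hvp hle
  · exact (alphaWord_trans_symm_eq_of_adapted hp hx hvp hv hle).symm

lemma tauEquiv_refl (x : Cantor) : tauEquiv α₀ α₁ (Homeomorph.refl Cantor) x = MulEquiv.refl Γ :=
  tauEquiv_eq (m := []) (w := []) ⟨x, rfl⟩ fun _ => rfl

lemma tauEquiv_apply_of_fixed (v : Cantor ≃ₜ Cantor) (x : Cantor) {g : Γ} (h₀ : α₀ g = g)
    (h₁ : α₁ g = g) : tauEquiv α₀ α₁ v x g = g := by
  unfold tauEquiv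
  split
  · simp [alphaWord_apply_of_fixed h₀ h₁, MulEquiv.symm_apply_eq]
  · rfl

lemma _root_.Commute.apply_permOf {a b : Cantor → Γ} {v w : Cantor ≃ₜ Cantor}
    (h : Commute (permOf α₀ α₁ a v) (permOf α₀ α₁ b w)) (x : Cantor) : v (w x) = w (v x) :=
  congrArg Prod.fst (DFunLike.congr_fun h.eq (x, 1))

lemma commute_permOf_refl_iff {a b : Cantor → Γ} {w : Cantor ≃ₜ Cantor} :
    Commute (permOf α₀ α₁ a (Homeomorph.refl Cantor)) (permOf α₀ α₁ b w) ↔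
      ∀ x g, a (w x) * (b (w x) * tauEquiv α₀ α₁ w x g) =
        b (w x) * tauEquiv α₀ α₁ w x (a x * g) := by
  simp [Commute, SemiconjBy, Equiv.ext_iff, permOf, tauEquiv_refl]

end Twist

lemma isLC_const {Γ : Type*} (g : Γ) : IsLC fun _ : Cantor => g :=
  ⟨{[]}, fun x => ⟨[], ⟨by simp, x, rfl⟩, fun w hw => by simpa using hw.1⟩, fun _ _ _ _ => rfl⟩

def ConstOnCylFrom {Γ : Type*} (a : Cantor → Γ) (N : ℕ) : Prop :=
  ∀ m : List Bool, N ≤ m.length → ∀ y z, a (cat m y) = a (cat m z)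

lemma _root_.IsLC.exists_constOnCylFrom {Γ : Type*} {a : Cantor → Γ} (ha : IsLC a) :
    ∃ N, ConstOnCylFrom a N := by
  obtain ⟨P, hP, hconst⟩ := ha
  refine ⟨P.sup List.length, fun m hm y z => ?_⟩
  obtain ⟨w, ⟨hwP, hw⟩, -⟩ := hP (cat m y)
  obtain ⟨s, rfl⟩ :=
    exists_append_of_mem_cyl hw (cat_mem_cyl m y) ((Finset.le_sup hwP).trans hm)
  rw [← cat_append, ← cat_append, hconst w hwP]

section Determination

variable {Γ : Type*} [Group Γ] {α₀ α₁ : Γ ≃* Γ} {a : Cantor → Γ}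

def twistedValue (α₀ α₁ : Γ ≃* Γ) (a : Cantor → Γ) (u : List Bool) : Γ :=
  alphaWord α₀ α₁ u (a (cat u zeroSeq))

lemma twistedValue_eq_of_commute_swapHomeo {u u' : List Bool} (hd : Disjoint (cyl u) (cyl u'))
    (h : Commute (permOf α₀ α₁ a (Homeomorph.refl Cantor))
      (permOf α₀ α₁ (fun _ => 1) (swapHomeo hd))) :
    twistedValue α₀ α₁ a u' = twistedValue α₀ α₁ a u := by
  have := commute_permOf_refl_iff.mp h (cat u zeroSeq) 1
  simp only [swapHomeo_apply, swapFun_cat_left, one_mul, map_one, mul_one,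
    tauEquiv_eq (v := swapHomeo hd) (cat_mem_cyl u zeroSeq) (swapFun_cat_left u u')] at this
  simp [twistedValue, this]

lemma twistedValue_concat {N : ℕ} (hN : ConstOnCylFrom a N) {u : List Bool} (hu : N ≤ u.length)
    (b : Bool) :
    twistedValue α₀ α₁ a (u ++ [b]) = (if b then α₁ else α₀) (twistedValue α₀ α₁ a u) := by
  rw [twistedValue, alphaWord_concat_apply, ← cat_append, hN u hu]
  rfl

lemma twistedValue_fixed {N : ℕ} (hN : ConstOnCylFrom a N)
    (hinv : ∀ u u', Disjoint (cyl u) (cyl u') → twistedValue α₀ α₁ a u' = twistedValue α₀ α₁ a u)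
    {u : List Bool} (hu : N ≤ u.length) :
    α₀ (twistedValue α₀ α₁ a u) = twistedValue α₀ α₁ a u ∧
      α₁ (twistedValue α₀ α₁ a u) = twistedValue α₀ α₁ a u := by
  have h01 := hinv (u ++ [false]) (u ++ [true]) (disjoint_cyl_append_cons u [] [] (by decide))
  have h010 := hinv (u ++ [false]) (u ++ [true] ++ [false])
    (by simpa using disjoint_cyl_append_cons u [] [false] (by decide))
  rw [twistedValue_concat hN (by simp; omega), twistedValue_concat hN hu,
    twistedValue_concat hN hu] at h010
  rw [twistedValue_concat hN hu, twistedValue_concat hN hu] at h01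
  simp only [Bool.false_eq_true, ite_false, ite_true] at h01 h010
  have h₁ := α₀.injective h010
  exact ⟨h01.symm.trans h₁, h₁⟩

lemma exists_fixed_eq_const_of_twistedValue_eq (ha : IsLC a)
    (hinv : ∀ u u', Disjoint (cyl u) (cyl u') → twistedValue α₀ α₁ a u' = twistedValue α₀ α₁ a u) :
    ∃ g : Γ, α₀ g = g ∧ α₁ g = g ∧ ∀ x, a x = g := by
  obtain ⟨N, hN⟩ := ha.exists_constOnCylFrom
  obtain ⟨h₀, h₁⟩ := twistedValue_fixed hN hinv (u := List.replicate N false) (by simp)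
  refine ⟨_, h₀, h₁, fun x => (alphaWord α₀ α₁ (prefixWord N x)).injective ?_⟩
  have hsame : twistedValue α₀ α₁ a (prefixWord N x) =
      twistedValue α₀ α₁ a (List.replicate N false) := by
    by_cases h : prefixWord N x = List.replicate N false
    · rw [h]
    · exact hinv _ _ (disjoint_cyl_of_length_eq (by simp) (Ne.symm h))
  rw [alphaWord_apply_of_fixed h₀ h₁, ← hsame, twistedValue, ← hN _ (by simp) (dropSeq N x),
    cat_prefixWord_dropSeq]

end Determination

end TwistedFraction

open TwistedFraction

theorem center_of_twisted_fraction_group_general (Γ : Type*) [Group Γ] (α₀ α₁ : Γ ≃* Γ)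
    (a : Cantor → Γ) (ha : IsLC a) (v : Cantor ≃ₜ Cantor) :
    (∀ (b : Cantor → Γ) (w : Cantor ≃ₜ Cantor), IsLC b → memV w →
        Commute (permOf α₀ α₁ a v) (permOf α₀ α₁ b w)) ↔
      (v = Homeomorph.refl Cantor ∧
        ∃ g : Γ, g ∈ Subgroup.center Γ ∧ α₀ g = g ∧ α₁ g = g ∧ ∀ x, a x = g) := by
  constructor
  · intro H
    obtain rfl : v = Homeomorph.refl Cantor := eq_refl_of_forall_commute fun σ hσ =>
      (H _ σ (isLC_const 1) hσ).apply_permOf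
    have hcenter (x : Cantor) : a x ∈ Subgroup.center Γ := by
      refine Subgroup.mem_center_iff.mpr fun h => ?_
      have := commute_permOf_refl_iff.mp (H (fun _ => h) _ (isLC_const h) memV_refl) x 1
      simpa [tauEquiv_refl] using this.symm
    obtain ⟨g, h₀, h₁, hg⟩ := exists_fixed_eq_const_of_twistedValue_eq ha fun u u' hd =>
      twistedValue_eq_of_commute_swapHomeo hd (H _ _ (isLC_const 1) (memV_swapHomeo hd))
    exact ⟨rfl, g, hg zeroSeq ▸ hcenter zeroSeq, h₀, h₁, hg⟩
  · rintro ⟨rfl, g, hg, h₀, h₁, hag⟩ b w - -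
    refine commute_permOf_refl_iff.mpr fun x k => ?_
    rw [hag, hag, map_mul, tauEquiv_apply_of_fixed w x h₀ h₁, ← mul_assoc, ← mul_assoc,
      Subgroup.mem_center_iff.mp hg]

/-- The center of the twisted fraction group `G = LΓ ⋊ V` equals
`D_𝔠(Z(Γ)^α)` : an element `a·v` of `G` is central iff `v = 1` and `a` is the constant map
with value a central element of `Γ` fixed by both `α₀` and `α₁`. -/
theorem center_of_twisted_fraction_group (Γ : Type*) [Group Γ] (α₀ α₁ : Γ ≃* Γ)
    (a : Cantor → Γ) (ha : IsLC a) (v : Cantor ≃ₜ Cantor) (hv : memV v) :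
    (∀ (b : Cantor → Γ) (w : Cantor ≃ₜ Cantor), IsLC b → memV w →
        Commute (permOf α₀ α₁ a v) (permOf α₀ α₁ b w)) ↔
      (v = Homeomorph.refl Cantor ∧
        ∃ g : Γ, g ∈ Subgroup.center Γ ∧ α₀ g = g ∧ α₁ g = g ∧ ∀ x, a x = g) :=
  center_of_twisted_fraction_group_general Γ α₀ α₁ a ha v
end
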